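/- arXiv:1904.05184 — 7 statements merged into one kernel-verified Lean document; each statement's English description precedes it below -/
import Mathlib

section
/- Let S and T be disjoint finite sets of real numbers, with demand functions α : S → ℕ and β : T → ℕ, and let M be a minimum-cost matching between S and T satisfying the demands. If b, c ∈ S and a, d ∈ T are points with a ≤ b < c ≤ d such that both (c, a) ∈ M and (b, d) ∈ M, then (b, a) ∈ M or (c, d) ∈ M. -/
open Finset

/-- `M` is a matching between `S` and `T`: a finite set of ordered pairs `(s, t)`
with `s ∈ S` and `t ∈ T`. -/
def IsMatching (S T : Finset ℝ) (M : Finset (ℝ × ℝ)) : Prop :=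
  ∀ p ∈ M, p.1 ∈ S ∧ p.2 ∈ T

/-- The cost of a matching: the sum of `|s - t|` over its pairs. -/
noncomputable def matchCost (M : Finset (ℝ × ℝ)) : ℝ :=
  ∑ p ∈ M, |p.1 - p.2|

/-- The degree of a point `x`: the number of pairs of `M` containing `x`. -/
noncomputable def matchDeg (M : Finset (ℝ × ℝ)) (x : ℝ) : ℕ :=
  (M.filter (fun q => q.1 = x ∨ q.2 = x)).card

/-- `M` satisfies the demands `α` on `S` and `β` on `T`. -/
def SatisfiesDemands (S T : Finset ℝ) (α β : ℝ → ℕ) (M : Finset (ℝ × ℝ)) : Prop :=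
  (∀ s ∈ S, α s ≤ matchDeg M s) ∧ (∀ t ∈ T, β t ≤ matchDeg M t)

/-- `M` is a minimum-cost matching between `S` and `T` satisfying the demands. -/
def IsMinCostMatching (S T : Finset ℝ) (α β : ℝ → ℕ) (M : Finset (ℝ × ℝ)) : Prop :=
  IsMatching S T M ∧ SatisfiesDemands S T α β M ∧
    ∀ M' : Finset (ℝ × ℝ), IsMatching S T M' → SatisfiesDemands S T α β M' →
      matchCost M ≤ matchCost M'

/-- Lemma 1: if a minimum-cost matching with demands contains the crossing pairs
`(c, a)` and `(b, d)` with `a ≤ b < c ≤ d`, then it contains `(b, a)` or `(c, d)`. -/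
theorem stmt_0 (S T : Finset ℝ) (hST : Disjoint S T) (α β : ℝ → ℕ)
    (M : Finset (ℝ × ℝ)) (hM : IsMinCostMatching S T α β M)
    (b c a d : ℝ) (hb : b ∈ S) (hc : c ∈ S) (ha : a ∈ T) (hd : d ∈ T)
    (hab : a ≤ b) (hbc : b < c) (hcd : c ≤ d)
    (hca : (c, a) ∈ M) (hbd : (b, d) ∈ M) :
    (b, a) ∈ M ∨ (c, d) ∈ M := by
  by_contra hcon
  push_neg at hcon
  obtain ⟨hba, hcdn⟩ := hcon
  obtain ⟨hMat, hDem, hMin⟩ := hM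
  have hab2 : a < b := lt_of_le_of_ne hab (fun h => Finset.disjoint_left.mp hST hb (h ▸ ha))
  have hcd2 : c < d := lt_of_le_of_ne hcd (fun h => Finset.disjoint_left.mp hST hc (h.symm ▸ hd))
  set M0 : Finset (ℝ × ℝ) := (M.erase (c, a)).erase (b, d) with hM0
  have hbdne : ((b, d) : ℝ × ℝ) ≠ (c, a) := fun h => absurd (congrArg Prod.fst h) (ne_of_lt hbc)
  have hbd0 : (b, d) ∈ M.erase (c, a) := Finset.mem_erase.mpr ⟨hbdne, hbd⟩
  have hcdn0 : (c, d) ∉ M0 := fun h => hcdn (Finset.mem_of_mem_erase (Finset.mem_of_mem_erase h))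
  have hban0 : (b, a) ∉ insert (c, d) M0 := by
    simp only [Finset.mem_insert, not_or]
    exact ⟨fun h => absurd (congrArg Prod.fst h) (ne_of_lt hbc),
      fun h => hba (Finset.mem_of_mem_erase (Finset.mem_of_mem_erase h))⟩
  set M' : Finset (ℝ × ℝ) := insert (b, a) (insert (c, d) M0) with hM'
  have hMat' : IsMatching S T M' := by
    intro p hp
    rcases Finset.mem_insert.mp hp with h | hp
    · subst h; exact ⟨hb, ha⟩
    rcases Finset.mem_insert.mp hp with h | hp
    · subst h; exact ⟨hc, hd⟩
    · exact hMat p (Finset.mem_of_mem_erase (Finset.mem_of_mem_erase hp))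
  have hneab : a ≠ b := ne_of_lt hab2
  have hneac : a ≠ c := ne_of_lt (hab2.trans hbc)
  have hnead : a ≠ d := ne_of_lt ((hab2.trans hbc).trans hcd2)
  have hnebc : b ≠ c := ne_of_lt hbc
  have hnebd : b ≠ d := ne_of_lt (hbc.trans hcd2)
  have hnecd : c ≠ d := ne_of_lt hcd2
  have hdeg : ∀ x, matchDeg M' x = matchDeg M x := by
    intro x
    simp only [matchDeg, Finset.card_filter]
    rw [hM', Finset.sum_insert hban0, Finset.sum_insert hcdn0,
      ← Finset.sum_erase_add M _ hca, ← Finset.sum_erase_add (M.erase (c,a)) _ hbd0, ← hM0]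
    by_cases hxa : a = x <;> by_cases hxb : b = x <;> by_cases hxc : c = x <;>
      by_cases hxd : d = x <;> simp_all <;> ring
  have hDem' : SatisfiesDemands S T α β M' :=
    ⟨fun s hs => (hdeg s) ▸ hDem.1 s hs, fun t ht => (hdeg t) ▸ hDem.2 t ht⟩
  have hcost : matchCost M = |c - a| + |b - d| + matchCost M0 := by
    simp only [matchCost]
    rw [← Finset.sum_erase_add M _ hca, ← Finset.sum_erase_add (M.erase (c,a)) _ hbd0, ← hM0]
    ring
  have hcost' : matchCost M' = |b - a| + |c - d| + matchCost M0 := by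
    simp only [matchCost, hM']
    rw [Finset.sum_insert hban0, Finset.sum_insert hcdn0]
    ring
  have h1 : |c - a| = c - a := abs_of_pos (by linarith)
  have h2 : |b - d| = d - b := by rw [abs_of_neg (by linarith)]; ring
  have h3 : |b - a| = b - a := abs_of_pos (by linarith)
  have h4 : |c - d| = d - c := by rw [abs_of_neg (by linarith)]; ring
  have := hMin M' hMat' hDem'
  rw [hcost, hcost', h1, h2, h3, h4] at this
  linarith
end

section
/- Let S and T be disjoint finite sets of real numbers, with demand functions α : S → ℕ and β : T → ℕ, and let M be a minimum-cost matching between S and T satisfying the demands. If a, c ∈ S and b, d ∈ T are points with a ≤ b < c ≤ d and (a, d) ∈ M, then (a, b) ∈ M or (c, d) ∈ M (or both). -/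
open Finset

/-! Replacing the pair `(a, d)` of `M` by the two pairs `(a, b)` and `(c, d)` lowers no
degree, since both endpoints of `(a, d)` stay covered. When `a ≤ b < c ≤ d` it strictly
lowers the cost, as `(b - a) + (d - c) < d - a`. So a minimum-cost matching cannot contain
`(a, d)` while missing both `(a, b)` and `(c, d)`. -/

theorem Finset.sum_insert_insert_erase_add {ι M : Type*} [DecidableEq ι] [AddCommMonoid M]
    {s : Finset ι} {p q r : ι} (hp : p ∈ s) (hq : q ∉ s) (hr : r ∉ s) (hqr : q ≠ r)
    (f : ι → M) :
    ∑ i ∈ insert q (insert r (s.erase p)), f i + f p = f q + f r + ∑ i ∈ s, f i := by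
  have hr' : r ∉ s.erase p := fun h => hr (mem_of_mem_erase h)
  have hq' : q ∉ insert r (s.erase p) := by
    simpa [hqr] using fun h => hq (mem_of_mem_erase h)
  rw [sum_insert hq', sum_insert hr', ← add_sum_erase s f hp]
  abel

noncomputable def uncross (M : Finset (ℝ × ℝ)) (a b c d : ℝ) : Finset (ℝ × ℝ) :=
  insert (a, b) (insert (c, d) (M.erase (a, d)))

section Uncross

variable {M : Finset (ℝ × ℝ)} {a b c d : ℝ}

theorem IsMatching.uncross {S T : Finset ℝ} (hM : IsMatching S T M)
    (ha : a ∈ S) (hb : b ∈ T) (hc : c ∈ S) (hd : d ∈ T) :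
    IsMatching S T (uncross M a b c d) := by
  intro p hp
  simp only [_root_.uncross, mem_insert, mem_erase] at hp
  rcases hp with rfl | rfl | ⟨-, hp⟩
  exacts [⟨ha, hb⟩, ⟨hc, hd⟩, hM p hp]

theorem matchDeg_eq_sum (M : Finset (ℝ × ℝ)) (x : ℝ) :
    matchDeg M x = ∑ q ∈ M, if q.1 = x ∨ q.2 = x then 1 else 0 :=
  card_filter _ _

theorem matchDeg_le_matchDeg_uncross (had : (a, d) ∈ M) (hab_nmem : (a, b) ∉ M)
    (hcd_nmem : (c, d) ∉ M) (hac : a ≠ c) (x : ℝ) :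
    matchDeg M x ≤ matchDeg (uncross M a b c d) x := by
  have hsum := sum_insert_insert_erase_add had hab_nmem hcd_nmem (by simp [hac])
    (fun q : ℝ × ℝ => if q.1 = x ∨ q.2 = x then 1 else 0)
  rw [← matchDeg_eq_sum, ← matchDeg_eq_sum] at hsum
  simp only at hsum
  unfold _root_.uncross
  split_ifs at hsum <;> grind

theorem matchCost_uncross_lt (had : (a, d) ∈ M) (hab_nmem : (a, b) ∉ M)
    (hcd_nmem : (c, d) ∉ M) (hab : a ≤ b) (hbc : b < c) (hcd : c ≤ d) :
    matchCost (uncross M a b c d) < matchCost M := by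
  have hsum := sum_insert_insert_erase_add had hab_nmem hcd_nmem (by simp [(hab.trans_lt hbc).ne])
    (fun q : ℝ × ℝ => |q.1 - q.2|)
  simp only at hsum
  rw [abs_of_nonpos (by linarith), abs_of_nonpos (by linarith),
    abs_of_nonpos (by linarith)] at hsum
  unfold matchCost _root_.uncross
  linarith

end Uncross

theorem SatisfiesDemands.mono {S T : Finset ℝ} {α β : ℝ → ℕ} {M M' : Finset (ℝ × ℝ)}
    (h : SatisfiesDemands S T α β M) (hdeg : ∀ x, matchDeg M x ≤ matchDeg M' x) :
    SatisfiesDemands S T α β M' :=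
  ⟨fun s hs => (h.1 s hs).trans (hdeg s), fun t ht => (h.2 t ht).trans (hdeg t)⟩

theorem stmt_1_general (S T : Finset ℝ) (α β : ℝ → ℕ)
    (M : Finset (ℝ × ℝ)) (hM : IsMinCostMatching S T α β M)
    (a c b d : ℝ) (ha : a ∈ S) (hc : c ∈ S) (hb : b ∈ T) (hd : d ∈ T)
    (hab : a ≤ b) (hbc : b < c) (hcd : c ≤ d)
    (had : (a, d) ∈ M) :
    (a, b) ∈ M ∨ (c, d) ∈ M := by
  by_contra! ⟨hab_nmem, hcd_nmem⟩
  obtain ⟨hmatch, hdem, hmin⟩ := hM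
  have hdem' : SatisfiesDemands S T α β (uncross M a b c d) :=
    hdem.mono (matchDeg_le_matchDeg_uncross had hab_nmem hcd_nmem (hab.trans_lt hbc).ne)
  exact (matchCost_uncross_lt had hab_nmem hcd_nmem hab hbc hcd).not_ge
    (hmin _ (hmatch.uncross ha hb hc hd) hdem')

/-- Lemma 2: if a minimum-cost matching with demands contains `(a, d)` with
`a ≤ b < c ≤ d`, `a, c ∈ S`, `b, d ∈ T`, then it contains `(a, b)` or `(c, d)`. -/
theorem stmt_1 (S T : Finset ℝ) (hST : Disjoint S T) (α β : ℝ → ℕ)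
    (M : Finset (ℝ × ℝ)) (hM : IsMinCostMatching S T α β M)
    (a c b d : ℝ) (ha : a ∈ S) (hc : c ∈ S) (hb : b ∈ T) (hd : d ∈ T)
    (hab : a ≤ b) (hbc : b < c) (hcd : c ≤ d)
    (had : (a, d) ∈ M) :
    (a, b) ∈ M ∨ (c, d) ∈ M :=
  stmt_1_general S T α β M hM a c b d ha hc hb hd hab hbc hcd had
end

section
/- Let S and T be disjoint finite sets of real numbers, with demand functions α : S → ℕ and β : T → ℕ, and let M be a minimum-cost matching between S and T satisfying the demands. If a, a′ ∈ S and b, b′ ∈ T are points with a′ < b′ < a < b such that (a, b′) ∈ M and (a′, b) ∈ M, then (a′, b′) ∈ M or (a, b) ∈ M. -/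
open Finset

lemma swap_sum {γ : Type*} [AddCommMonoid γ] (M : Finset (ℝ×ℝ)) (p q r s : ℝ×ℝ)
    (hp : p ∈ M) (hq : q ∈ M) (hpq : p ≠ q) (hrM : r ∉ (M.erase p).erase q)
    (hsM : s ∉ insert r ((M.erase p).erase q)) (g : ℝ×ℝ → γ) :
    (∑ x ∈ insert s (insert r ((M.erase p).erase q)), g x) + g p + g q
      = (∑ x ∈ M, g x) + g r + g s := by
  rw [Finset.sum_insert hsM, Finset.sum_insert hrM]
  have h1 : ∑ x ∈ (M.erase p).erase q, g x + g q = ∑ x ∈ M.erase p, g x :=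
    Finset.sum_erase_add _ _ (Finset.mem_erase.mpr ⟨fun h => hpq h.symm, hq⟩)
  have h2 : ∑ x ∈ M.erase p, g x + g p = ∑ x ∈ M, g x :=
    Finset.sum_erase_add _ _ hp
  rw [← h2, ← h1]
  abel

/-- In a minimum-cost matching with demands, if `a′ < b′ < a < b` with
`(a, b′) ∈ M` and `(a′, b) ∈ M`, then `(a′, b′) ∈ M` or `(a, b) ∈ M`. -/
theorem stmt_4 (S T : Finset ℝ) (hST : Disjoint S T) (α β : ℝ → ℕ)
    (M : Finset (ℝ × ℝ)) (hM : IsMinCostMatching S T α β M)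
    (a a' b b' : ℝ) (ha : a ∈ S) (ha' : a' ∈ S) (hb : b ∈ T) (hb' : b' ∈ T)
    (h1 : a' < b') (h2 : b' < a) (h3 : a < b)
    (hab' : (a, b') ∈ M) (ha'b : (a', b) ∈ M) :
(a', b') ∈ M ∨ (a, b) ∈ M := by
  by_cases hc1 : (a', b') ∈ M
  · exact Or.inl hc1
  by_cases hc2 : (a, b) ∈ M
  · exact Or.inr hc2
  exfalso
  set M0 : Finset (ℝ × ℝ) := (M.erase (a, b')).erase (a', b) with hM0
  have hab'ne : ((a : ℝ), b') ≠ (a', b) := by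
    intro h; injection h with h1' h2'; linarith
  have hrM : ((a' : ℝ), b') ∉ M0 := fun h => hc1 (Finset.mem_of_mem_erase (Finset.mem_of_mem_erase h))
  have hsM : ((a : ℝ), b) ∉ insert ((a' : ℝ), b') M0 := by
    intro h
    rcases Finset.mem_insert.mp h with h | h
    · injection h with h1' h2'; linarith
    · exact hc2 (Finset.mem_of_mem_erase (Finset.mem_of_mem_erase h))
  set M' : Finset (ℝ × ℝ) := insert ((a : ℝ), b) (insert ((a' : ℝ), b') M0) with hM'
  -- M' is a matching
  have hmatch : IsMatching S T M' := by
    intro p hp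
    rcases Finset.mem_insert.mp hp with rfl | hp
    · exact ⟨ha, hb⟩
    rcases Finset.mem_insert.mp hp with rfl | hp
    · exact ⟨ha', hb'⟩
    · exact hM.1 p (Finset.mem_of_mem_erase (Finset.mem_of_mem_erase hp))
  -- degrees are preserved
  have hdeg : ∀ x : ℝ, matchDeg M' x = matchDeg M x := by
    intro x
    have hk := swap_sum M (a, b') (a', b) (a', b') (a, b) hab' ha'b hab'ne hrM hsM
      (fun q => if q.1 = x ∨ q.2 = x then 1 else 0)
    rw [← Finset.card_filter, ← Finset.card_filter] at hk
    have hind : (if a = x ∨ b' = x then 1 else 0) + (if a' = x ∨ b = x then 1 else 0)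
        = (if a' = x ∨ b' = x then 1 else 0) + (if a = x ∨ b = x then 1 else 0) := by
      by_cases e1 : a = x <;> by_cases e2 : a' = x <;> by_cases e3 : b = x <;>
        by_cases e4 : b' = x <;> simp_all <;> linarith
    simp only at hk
    unfold matchDeg
    rw [add_assoc, add_assoc, hind] at hk
    exact Nat.add_right_cancel hk
  -- M' satisfies demands
  have hdem : SatisfiesDemands S T α β M' :=
    ⟨fun s hs => (hdeg s) ▸ hM.2.1.1 s hs, fun t ht => (hdeg t) ▸ hM.2.1.2 t ht⟩
  -- cost comparison
  have hcost := swap_sum M (a, b') (a', b) (a', b') (a, b) hab' ha'b hab'ne hrM hsM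
    (fun q => |q.1 - q.2|)
  simp only at hcost
  have e1 : |a - b'| = a - b' := abs_of_pos (by linarith)
  have e2 : |a' - b| = -(a' - b) := abs_of_neg (by linarith)
  have e3 : |a' - b'| = -(a' - b') := abs_of_neg (by linarith)
  have e4 : |a - b| = -(a - b) := abs_of_neg (by linarith)
  have hlt : matchCost M' < matchCost M := by
    unfold matchCost
    rw [e1, e2, e3, e4] at hcost
    linarith [hcost]
  exact absurd (hM.2.2 M' hmatch hdem) (not_le.mpr hlt)
end

section
/- Let S and T be disjoint finite sets of real numbers, with demand functions α : S → ℕ, β : T → ℕ and capacity functions on S and T, and let M be a minimum-cost matching between S and T satisfying the demands and capacities. If b, c ∈ S and a, d ∈ T are points with a ≤ b < c ≤ d such that both (c, a) ∈ M and (b, d) ∈ M, then (b, a) ∈ M or (c, d) ∈ M. -/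
open Finset

/-- `M` satisfies the demands `α`, `β` and the capacities `CapS`, `CapT`. -/
def SatisfiesDemandsCaps (S T : Finset ℝ) (α β CapS CapT : ℝ → ℕ)
    (M : Finset (ℝ × ℝ)) : Prop :=
  (∀ s ∈ S, α s ≤ matchDeg M s ∧ matchDeg M s ≤ CapS s) ∧
    (∀ t ∈ T, β t ≤ matchDeg M t ∧ matchDeg M t ≤ CapT t)

/-- `M` is a minimum-cost matching between `S` and `T` satisfying the demands
and capacities. -/
def IsMinCostMatchingCaps (S T : Finset ℝ) (α β CapS CapT : ℝ → ℕ)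
    (M : Finset (ℝ × ℝ)) : Prop :=
  IsMatching S T M ∧ SatisfiesDemandsCaps S T α β CapS CapT M ∧
    ∀ M' : Finset (ℝ × ℝ), IsMatching S T M' →
      SatisfiesDemandsCaps S T α β CapS CapT M' →
      matchCost M ≤ matchCost M'


private theorem stmt5_deg_insert (M : Finset (ℝ × ℝ)) (p : ℝ × ℝ) (hp : p ∉ M) (x : ℝ) :
    matchDeg (insert p M) x = (if p.1 = x ∨ p.2 = x then 1 else 0) + matchDeg M x := by
  unfold matchDeg
  rw [Finset.filter_insert]
  split
  · rw [Finset.card_insert_of_notMem (fun h => hp (Finset.mem_filter.mp h).1)]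
    ring
  · simp


private theorem stmt5_count (x a b c d : ℝ) (hab : a ≠ b) (hac : a ≠ c) (had : a ≠ d)
    (hbc : b ≠ c) (hbd : b ≠ d) (hcd : c ≠ d) :
    ((if b = x ∨ a = x then 1 else 0) + (if c = x ∨ d = x then 1 else 0) : ℕ) =
      (if c = x ∨ a = x then 1 else 0) + (if b = x ∨ d = x then 1 else 0) := by
  by_cases ha' : a = x <;> by_cases hb' : b = x <;> by_cases hc' : c = x <;>
    by_cases hd' : d = x <;>
    first
      | (exact absurd (ha'.trans hb'.symm) hab)
      | (exact absurd (ha'.trans hc'.symm) hac)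
      | (exact absurd (ha'.trans hd'.symm) had)
      | (exact absurd (hb'.trans hc'.symm) hbc)
      | (exact absurd (hb'.trans hd'.symm) hbd)
      | (exact absurd (hc'.trans hd'.symm) hcd)
      | simp [ha', hb', hc', hd']

private theorem stmt5_cost_insert (M : Finset (ℝ × ℝ)) (p : ℝ × ℝ) (hp : p ∉ M) :
    matchCost (insert p M) = |p.1 - p.2| + matchCost M := by
  unfold matchCost; rw [Finset.sum_insert hp]

/-- Lemma 1 in the capacity setting: crossing pairs in a minimum-cost matching
with demands and capacities. -/
theorem stmt_5 (S T : Finset ℝ) (hST : Disjoint S T) (α β CapS CapT : ℝ → ℕ)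
    (M : Finset (ℝ × ℝ)) (hM : IsMinCostMatchingCaps S T α β CapS CapT M)
    (b c a d : ℝ) (hb : b ∈ S) (hc : c ∈ S) (ha : a ∈ T) (hd : d ∈ T)
    (hab : a ≤ b) (hbc : b < c) (hcd : c ≤ d)
    (hca : (c, a) ∈ M) (hbd : (b, d) ∈ M) :
    (b, a) ∈ M ∨ (c, d) ∈ M := by
  by_contra hcon
  push_neg at hcon
  obtain ⟨hbaM, hcdM⟩ := hcon
  obtain ⟨hmatch, hsat, hmin⟩ := hM
  -- distinctness
  have hbc' : b ≠ c := ne_of_lt hbc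
  have hab' : a ≠ b := fun h => Finset.disjoint_left.mp hST hb (h ▸ ha)
  have hcd'' : c ≠ d := fun h => Finset.disjoint_left.mp hST hc (h ▸ hd)
  have hac : a ≠ c := ne_of_lt (lt_of_le_of_lt hab hbc)
  have had : a ≠ d := ne_of_lt (lt_of_le_of_lt hab (lt_of_lt_of_le hbc hcd))
  have hbd' : b ≠ d := ne_of_lt (lt_of_lt_of_le hbc hcd)
  -- decompose M
  set M₀ := (M.erase (c, a)).erase (b, d) with hM₀
  have hcane : ((b, d) : ℝ × ℝ) ≠ (c, a) := by simp [hbc']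
  have hbdE : (b, d) ∈ M.erase (c, a) := Finset.mem_erase.mpr ⟨hcane, hbd⟩
  have hMeq : M = insert (c, a) (insert (b, d) M₀) := by
    rw [hM₀, Finset.insert_erase hbdE, Finset.insert_erase hca]
  have hbd0 : (b, d) ∉ M₀ := Finset.notMem_erase _ _
  have hca0 : (c, a) ∉ insert (b, d) M₀ := by
    rw [Finset.insert_erase hbdE]; exact Finset.notMem_erase _ _
  have hsub : M₀ ⊆ M := Finset.Subset.trans (Finset.erase_subset _ _) (Finset.erase_subset _ _)
  -- the swapped matching
  set M' := insert (b, a) (insert (c, d) M₀) with hM'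
  have hcd0 : (c, d) ∉ M₀ := fun h => hcdM (hsub h)
  have hba0 : (b, a) ∉ insert (c, d) M₀ := by
    simp only [Finset.mem_insert]
    push_neg
    exact ⟨by simp [hbc'], fun h => hbaM (hsub h)⟩
  -- degrees are preserved
  have hdeg : ∀ x, matchDeg M' x = matchDeg M x := by
    intro x
    rw [hMeq, hM', stmt5_deg_insert _ _ hca0, stmt5_deg_insert _ _ hbd0,
      stmt5_deg_insert _ _ hba0, stmt5_deg_insert _ _ hcd0]
    have := stmt5_count x a b c d hab' hac had hbc' hbd' hcd''
    simp only [Prod.fst, Prod.snd] at *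
    omega
  -- M' is a matching
  have hmatch' : IsMatching S T M' := by
    intro p hp
    rw [hM'] at hp
    simp only [Finset.mem_insert] at hp
    rcases hp with rfl | rfl | hp
    · exact ⟨hb, ha⟩
    · exact ⟨hc, hd⟩
    · exact hmatch p (hsub hp)
  -- M' satisfies demands and caps
  have hsat' : SatisfiesDemandsCaps S T α β CapS CapT M' := by
    constructor
    · intro s hs; rw [hdeg]; exact hsat.1 s hs
    · intro t ht; rw [hdeg]; exact hsat.2 t ht
  have hle := hmin M' hmatch' hsat'
  have hcostM : matchCost M = |c - a| + (|b - d| + matchCost M₀) := by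
    rw [hMeq, stmt5_cost_insert _ _ hca0, stmt5_cost_insert _ _ hbd0]
  have hcostM' : matchCost M' = |b - a| + (|c - d| + matchCost M₀) := by
    rw [hM', stmt5_cost_insert _ _ hba0, stmt5_cost_insert _ _ hcd0]
  rw [hcostM, hcostM'] at hle
  rw [abs_of_nonneg (by linarith), abs_of_nonpos (by linarith),
    abs_of_nonneg (by linarith), abs_of_nonpos (by linarith)] at hle
  linarith
end

section
/- Let S and T be disjoint finite sets of real numbers with demand functions α : S → ℕ and β : T → ℕ, and let M be a matching between S and T satisfying the demands. Suppose b, c ∈ S and a, d ∈ T with a ≤ b < c ≤ d, (c, a) ∈ M, (b, d) ∈ M, (b, a) ∉ M and (c, d) ∉ M. Then the matching M′ obtained from M by removing the pairs (c, a) and (b, d) and inserting the pairs (b, a) and (c, d) satisfies deg_{M′}(p) = deg_M(p) for every point p (in particular M′ satisfies the demands), and the cost of M′ is strictly smaller than the cost of M. -/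
open Finset

/-- The uncrossing exchange: replacing the crossing pairs `(c, a)`, `(b, d)` by
`(b, a)`, `(c, d)` preserves all degrees (hence the demands) and strictly
decreases the cost. -/
theorem stmt_8 (S T : Finset ℝ) (hST : Disjoint S T) (α β : ℝ → ℕ)
    (M : Finset (ℝ × ℝ)) (hmatch : IsMatching S T M)
    (hdem : SatisfiesDemands S T α β M)
    (b c a d : ℝ) (hb : b ∈ S) (hc : c ∈ S) (ha : a ∈ T) (hd : d ∈ T)
    (hab : a ≤ b) (hbc : b < c) (hcd : c ≤ d)
    (hca : (c, a) ∈ M) (hbd : (b, d) ∈ M)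
    (hba : (b, a) ∉ M) (hcdn : (c, d) ∉ M) :
    (∀ p : ℝ, matchDeg (insert (b, a) (insert (c, d) ((M.erase (c, a)).erase (b, d)))) p
        = matchDeg M p) ∧
    SatisfiesDemands S T α β (insert (b, a) (insert (c, d) ((M.erase (c, a)).erase (b, d)))) ∧
    matchCost (insert (b, a) (insert (c, d) ((M.erase (c, a)).erase (b, d)))) < matchCost M := by
  have hbc' : b ≠ c := ne_of_lt hbc
  have hne1 : ((b, d) : ℝ × ℝ) ≠ (c, a) := by simp [hbc']
  have hE1 : ((b, d) : ℝ × ℝ) ∈ M.erase (c, a) := Finset.mem_erase.mpr ⟨hne1, hbd⟩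
  set E : Finset (ℝ × ℝ) := (M.erase (c, a)).erase (b, d) with hEdef
  have hEsub : E ⊆ M := (Finset.erase_subset _ _).trans (Finset.erase_subset _ _)
  have hcdE : ((c, d) : ℝ × ℝ) ∉ E := fun h => hcdn (hEsub h)
  have hbaE : ((b, a) : ℝ × ℝ) ∉ insert (c, d) E := by
    intro h
    rcases Finset.mem_insert.mp h with h | h
    · exact hbc' (by simpa using congrArg Prod.fst h)
    · exact hba (hEsub h)
  have hdeg : ∀ p : ℝ, matchDeg (insert (b, a) (insert (c, d) E)) p = matchDeg M p := by
    intro p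
    have hsum : ∀ N : Finset (ℝ × ℝ),
        matchDeg N p = ∑ q ∈ N, (if q.1 = p ∨ q.2 = p then 1 else 0) := by
      intro N; rw [matchDeg, Finset.card_filter]
    rw [hsum, hsum, Finset.sum_insert hbaE, Finset.sum_insert hcdE,
      ← Finset.sum_erase_add M _ hca, ← Finset.sum_erase_add _ _ hE1]
    have key : (if b = p ∨ a = p then 1 else 0) + (if c = p ∨ d = p then 1 else 0)
        = (if b = p ∨ d = p then 1 else 0) + (if c = p ∨ a = p then 1 else 0) := by
      have h1 : a < c := lt_of_le_of_lt hab hbc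
      have h2 : b < d := lt_of_lt_of_le hbc hcd
      have h3 : a < d := lt_of_lt_of_le (lt_of_le_of_lt hab hbc) hcd
      have h4 : b ≠ a := fun h => Finset.disjoint_left.mp hST hb (h ▸ ha)
      have h5 : c ≠ d := fun h => Finset.disjoint_left.mp hST hc (h ▸ hd)
      by_cases hbp : b = p <;> by_cases hap : a = p <;> by_cases hcp : c = p <;>
        by_cases hdp : d = p <;> simp_all <;> linarith
    simp only [hEdef]
    omega
  refine ⟨hdeg, ⟨?_, ?_⟩, ?_⟩
  · intro s hs; rw [hdeg]; exact hdem.1 s hs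
  · intro t ht; rw [hdeg]; exact hdem.2 t ht
  · have hcost : matchCost (insert (b, a) (insert (c, d) E))
        = |b - a| + |c - d| + (matchCost M - |c - a| - |b - d|) := by
      rw [matchCost, Finset.sum_insert hbaE, Finset.sum_insert hcdE]
      have e1 : ∑ q ∈ M.erase (c, a), |q.1 - q.2|
          = (∑ q ∈ M, |q.1 - q.2|) - |c - a| := by
        rw [Finset.sum_erase_eq_sub hca]
      have e2 : ∑ q ∈ E, |q.1 - q.2|
          = (∑ q ∈ M.erase (c, a), |q.1 - q.2|) - |b - d| := by
        rw [hEdef, Finset.sum_erase_eq_sub hE1]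
      rw [e2, e1]; rw [matchCost]; ring
    rw [hcost]
    rw [abs_of_nonneg (by linarith : (0:ℝ) ≤ b - a),
      abs_of_nonpos (by linarith : (c - d : ℝ) ≤ 0),
      abs_of_nonneg (by linarith : (0:ℝ) ≤ c - a),
      abs_of_nonpos (by linarith : (b - d : ℝ) ≤ 0)]
    linarith
end

section
/- Let S and T be disjoint finite sets of real numbers with demand functions α : S → ℕ and β : T → ℕ, and let M be a matching between S and T satisfying the demands. Suppose a, c ∈ S and b, d ∈ T with a ≤ b < c ≤ d, (a, d) ∈ M, (a, b) ∉ M and (c, d) ∉ M. Then the matching M′ obtained from M by removing the pair (a, d) and inserting the pairs (a, b) and (c, d) satisfies the demands (the degrees of a and d are unchanged and the degrees of b and c increase by one), and the cost of M′ is strictly smaller than the cost of M. -/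
open Finset

lemma deg_erase (M : Finset (ℝ × ℝ)) (p : ℝ × ℝ) (hp : p ∈ M) (x : ℝ) :
    matchDeg (M.erase p) x + (if p.1 = x ∨ p.2 = x then 1 else 0) = matchDeg M x := by
  unfold matchDeg
  rw [Finset.filter_erase]
  split_ifs with h
  · have hpf : p ∈ M.filter (fun q => q.1 = x ∨ q.2 = x) := Finset.mem_filter.mpr ⟨hp, h⟩
    rw [Finset.card_erase_of_mem hpf]
    have := Finset.card_pos.mpr ⟨p, hpf⟩
    omega
  · rw [Finset.erase_eq_of_notMem (by simp [Finset.mem_filter, h])]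
    omega

lemma deg_insert (N : Finset (ℝ × ℝ)) (q : ℝ × ℝ) (hq : q ∉ N) (x : ℝ) :
    matchDeg (insert q N) x = matchDeg N x + (if q.1 = x ∨ q.2 = x then 1 else 0) := by
  unfold matchDeg
  rw [Finset.filter_insert]
  split_ifs with h
  · rw [Finset.card_insert_of_notMem (fun hmem => hq (Finset.mem_filter.mp hmem).1)]
  · simp

/-- Splitting the long pair `(a, d)` into `(a, b)` and `(c, d)`: the demands are
still satisfied (degrees of `a` and `d` are unchanged, degrees of `b` and `c`
increase by one) and the cost strictly decreases. -/
theorem stmt_9 (S T : Finset ℝ) (hST : Disjoint S T) (α β : ℝ → ℕ)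
    (M : Finset (ℝ × ℝ)) (hmatch : IsMatching S T M)
    (hdem : SatisfiesDemands S T α β M)
    (a c b d : ℝ) (ha : a ∈ S) (hc : c ∈ S) (hb : b ∈ T) (hd : d ∈ T)
    (hab : a ≤ b) (hbc : b < c) (hcd : c ≤ d)
    (had : (a, d) ∈ M) (habn : (a, b) ∉ M) (hcdn : (c, d) ∉ M) :
    SatisfiesDemands S T α β (insert (a, b) (insert (c, d) (M.erase (a, d)))) ∧
    matchDeg (insert (a, b) (insert (c, d) (M.erase (a, d)))) a = matchDeg M a ∧
    matchDeg (insert (a, b) (insert (c, d) (M.erase (a, d)))) d = matchDeg M d ∧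
    matchDeg (insert (a, b) (insert (c, d) (M.erase (a, d)))) b = matchDeg M b + 1 ∧
    matchDeg (insert (a, b) (insert (c, d) (M.erase (a, d)))) c = matchDeg M c + 1 ∧
    matchCost (insert (a, b) (insert (c, d) (M.erase (a, d)))) < matchCost M := by
  have hadne : a ≠ d := fun h => Finset.disjoint_left.mp hST ha (h ▸ hd)
  have habne : a ≠ b := fun h => Finset.disjoint_left.mp hST ha (h ▸ hb)
  have hcdne : c ≠ d := fun h => Finset.disjoint_left.mp hST hc (h ▸ hd)
  have hacne : a ≠ c := ne_of_lt (lt_of_le_of_lt hab hbc)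
  have hbcne : b ≠ c := ne_of_lt hbc
  have hbdne : b ≠ d := ne_of_lt (lt_of_lt_of_le hbc hcd)
  have hcdE : (c, d) ∉ M.erase (a, d) := fun h => hcdn (Finset.mem_of_mem_erase h)
  have habE : (a, b) ∉ insert (c, d) (M.erase (a, d)) := by
    simp only [Finset.mem_insert]
    rintro (h | h)
    · exact hacne (congrArg Prod.fst h)
    · exact habn (Finset.mem_of_mem_erase h)
  -- general degree formula
  have degF : ∀ x, matchDeg (insert (a, b) (insert (c, d) (M.erase (a, d)))) x
      + (if a = x ∨ d = x then 1 else 0)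
      = matchDeg M x + (if a = x ∨ b = x then 1 else 0) + (if c = x ∨ d = x then 1 else 0) := by
    intro x
    rw [deg_insert _ _ habE, deg_insert _ _ hcdE]
    have h1 := deg_erase M (a, d) had x
    simp only at h1 ⊢
    omega
  have degGe : ∀ x, matchDeg M x ≤ matchDeg (insert (a, b) (insert (c, d) (M.erase (a, d)))) x := by
    intro x
    have h := degF x
    split_ifs at h <;> first | omega | (exfalso; tauto)
  refine ⟨⟨fun s hs => (hdem.1 s hs).trans (degGe s), fun t ht => (hdem.2 t ht).trans (degGe t)⟩,
    ?_, ?_, ?_, ?_, ?_⟩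
  · have h := degF a
    rw [if_pos (Or.inl rfl : a = a ∨ d = a), if_pos (Or.inl rfl : a = a ∨ b = a),
      if_neg (show ¬(c = a ∨ d = a) by rintro (h | h); exact hacne h.symm; exact hadne h.symm)] at h
    omega
  · have h := degF d
    rw [if_pos (Or.inr rfl : a = d ∨ d = d),
      if_neg (show ¬(a = d ∨ b = d) by rintro (h | h); exact hadne h; exact hbdne h),
      if_pos (Or.inr rfl : c = d ∨ d = d)] at h
    omega
  · have h := degF b
    rw [if_neg (show ¬(a = b ∨ d = b) by rintro (h | h); exact habne h; exact hbdne h.symm),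
      if_pos (Or.inr rfl : a = b ∨ b = b),
      if_neg (show ¬(c = b ∨ d = b) by rintro (h | h); exact hbcne h.symm; exact hbdne h.symm)] at h
    omega
  · have h := degF c
    rw [if_neg (show ¬(a = c ∨ d = c) by rintro (h | h); exact hacne h; exact hcdne h.symm),
      if_neg (show ¬(a = c ∨ b = c) by rintro (h | h); exact hacne h; exact hbcne h),
      if_pos (Or.inl rfl : c = c ∨ d = c)] at h
    omega
  · unfold matchCost
    rw [Finset.sum_insert habE, Finset.sum_insert hcdE,
      Finset.sum_erase_eq_sub (f := fun p => |p.1 - p.2|) had]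
    simp only
    have e1 : |a - b| = b - a := by rw [abs_sub_comm]; exact abs_of_nonneg (by linarith)
    have e2 : |c - d| = d - c := by rw [abs_sub_comm]; exact abs_of_nonneg (by linarith)
    have e3 : |a - d| = d - a := by rw [abs_sub_comm]; exact abs_of_nonneg (by linarith)
    rw [e1, e2, e3]
    linarith
end

section
/- Let S and T be disjoint finite sets of real numbers with demand functions α : S → ℕ and β : T → ℕ, and let M be a minimum-cost matching between S and T satisfying the demands. Then there is no pair (s, t) ∈ M with deg_M(s) > α(s) and deg_M(t) > β(t); that is, at least one endpoint p of each pair of M satisfies deg_M(p) ≤ demand(p). -/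
open Finset

/-- In a minimum-cost matching with demands, no pair has both endpoints of
degree strictly larger than their demands. -/
theorem stmt_11 (S T : Finset ℝ) (hST : Disjoint S T) (α β : ℝ → ℕ)
    (M : Finset (ℝ × ℝ)) (hM : IsMinCostMatching S T α β M)
    (s t : ℝ) (hst : (s, t) ∈ M) :
    matchDeg M s ≤ α s ∨ matchDeg M t ≤ β t := by
  by_contra h
  push_neg at h
  obtain ⟨hs, ht⟩ := h
  obtain ⟨hMatch, ⟨hα, hβ⟩, hmin⟩ := hM
  have hsS : s ∈ S := (hMatch _ hst).1
  have htT : t ∈ T := (hMatch _ hst).2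
  set M' := M.erase (s, t) with hM'
  -- degrees in M'
  have hdeg : ∀ x, matchDeg M x - 1 ≤ matchDeg M' x := by
    intro x
    unfold matchDeg
    rw [hM', Finset.filter_erase]
    have := Finset.pred_card_le_card_erase
      (s := M.filter (fun q => q.1 = x ∨ q.2 = x)) (a := (s, t))
    simpa using this
  have hmatch' : IsMatching S T M' := fun p hp => hMatch p (Finset.mem_of_mem_erase hp)
  have hsat' : SatisfiesDemands S T α β M' := by
    constructor
    · intro x hx
      by_cases hxs : x = s
      · subst hxs
        calc α x ≤ matchDeg M x - 1 := by omega
          _ ≤ matchDeg M' x := hdeg x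
      · have : matchDeg M x = matchDeg M' x := by
          unfold matchDeg
          rw [hM', Finset.filter_erase]
          rw [Finset.erase_eq_of_notMem]
          simp only [Finset.mem_filter]
          rintro ⟨-, h1 | h2⟩
          · exact hxs h1.symm
          · exact absurd hx (Finset.disjoint_left.mp hST.symm (h2 ▸ htT))
        rw [← this]; exact hα x hx
    · intro x hx
      by_cases hxt : x = t
      · subst hxt
        calc β x ≤ matchDeg M x - 1 := by omega
          _ ≤ matchDeg M' x := hdeg x
      · have : matchDeg M x = matchDeg M' x := by
          unfold matchDeg
          rw [hM', Finset.filter_erase]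
          rw [Finset.erase_eq_of_notMem]
          simp only [Finset.mem_filter]
          rintro ⟨-, h1 | h2⟩
          · exact absurd hx (Finset.disjoint_left.mp hST (h1 ▸ hsS))
          · exact hxt h2.symm
        rw [← this]; exact hβ x hx
  have hcost : matchCost M' < matchCost M := by
    unfold matchCost
    rw [hM']
    have hne : s ≠ t := fun h => Finset.disjoint_left.mp hST hsS (h ▸ htT)
    have : ∑ p ∈ M.erase (s, t), |p.1 - p.2| + |s - t|
        = ∑ p ∈ M, |p.1 - p.2| := by
      have := Finset.sum_erase_add M (fun p => |p.1 - p.2|) hst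
      simpa using this
    have hpos : 0 < |s - t| := abs_pos.mpr (sub_ne_zero.mpr hne)
    linarith
  exact absurd (hmin M' hmatch' hsat') (not_le.mpr hcost)
end
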